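/- arXiv:2604.18475 — 2 statements merged into one kernel-verified Lean document; each statement's English description precedes it below -/
import Mathlib

section
/- Let G be a finite group and let P(G) = {g ∈ G : the order of g is 1 or a prime}. If the prime-coprime graph Θ(G) is a split graph, then the independence number of Θ(G) equals 1 when G = P(G), and equals |G| − |P(G)| when G ≠ P(G). -/
/-- The prime-coprime graph: distinct vertices `g, h` are adjacent iff
`gcd (orderOf g) (orderOf h)` is `1` or a prime. -/
def primeCoprimeGraph (G : Type*) [Monoid G] : SimpleGraph G where
  Adj g h := g ≠ h ∧
    (Nat.gcd (orderOf g) (orderOf h) = 1 ∨ (Nat.gcd (orderOf g) (orderOf h)).Prime)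
  symm := by
    constructor
    rintro g h ⟨hne, hd⟩
    exact ⟨hne.symm, by rwa [Nat.gcd_comm]⟩
  loopless := by constructor; rintro g ⟨hne, -⟩; exact hne rfl

/-- A set of vertices is independent if no two of its elements are adjacent. -/
def IsIndepSet {V : Type*} (Γ : SimpleGraph V) (s : Set V) : Prop :=
  s.Pairwise fun a b => ¬ Γ.Adj a b

open scoped Classical in
/-- The independence number of a graph on a finite vertex set. -/
noncomputable def indepNum {V : Type*} [Fintype V] (Γ : SimpleGraph V) : ℕ :=
  Finset.univ.sup fun s : Finset V => if IsIndepSet Γ (s : Set V) then s.card else 0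

/-- A graph is split if its vertex set can be partitioned into two disjoint nonempty
subsets, one a clique and the other an independent set. -/
def IsSplit {V : Type*} (Γ : SimpleGraph V) : Prop :=
  ∃ K I : Set V, K.Nonempty ∧ I.Nonempty ∧ Disjoint K I ∧ K ∪ I = Set.univ ∧
    Γ.IsClique K ∧ IsIndepSet Γ I

/-!
Elements of order 1 or a prime are adjacent to every other vertex of `Θ(G)`, so an
independent set containing one of them is a singleton. An element `g` of any other order is
not adjacent to `g⁻¹ ≠ g`, so in a split partition `K ∪ I` one of `g, g⁻¹` lies in the
independent part `I`. Since adjacency only depends on orders, two elements of non-prime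
orders that were adjacent would give two adjacent elements of `I`. Hence, when such elements
exist, they form a maximum independent set.
-/

section Graph

variable {V : Type*} {Γ : SimpleGraph V}

lemma IsIndepSet.card_le_one_of_mem {s : Finset V} (hs : IsIndepSet Γ s) {v : V} (hv : v ∈ s)
    (hadj : ∀ w, v ≠ w → Γ.Adj v w) : s.card ≤ 1 := by
  have heq : ∀ w ∈ s, w = v := fun w hw =>
    by_contra fun hne => hs (Finset.mem_coe.2 hv) hw (Ne.symm hne) (hadj w (Ne.symm hne))
  exact Finset.card_le_one.2 fun a ha b hb => (heq a ha).trans (heq b hb).symm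

lemma indepNum_eq_card [Fintype V] {t : Finset V} (ht : IsIndepSet Γ t)
    (hmax : ∀ s : Finset V, IsIndepSet Γ s → s.card ≤ t.card) : indepNum Γ = t.card := by
  classical
  apply le_antisymm
  · refine Finset.sup_le fun s _ => ?_
    split_ifs with hs
    exacts [hmax s hs, Nat.zero_le _]
  · have := Finset.le_sup (f := fun s : Finset V =>
      if IsIndepSet Γ (s : Set V) then s.card else 0) (Finset.mem_univ t)
    rwa [if_pos ht] at this

lemma indepNum_eq_one_of_forall_adj [Fintype V] [Nonempty V]
    (hadj : ∀ v w, v ≠ w → Γ.Adj v w) : indepNum Γ = 1 := by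
  obtain ⟨v₀⟩ := ‹Nonempty V›
  rw [← Finset.card_singleton v₀]
  refine indepNum_eq_card (by simp [IsIndepSet]) fun s hs => ?_
  rcases s.eq_empty_or_nonempty with rfl | ⟨v, hv⟩
  · simp
  · simpa using hs.card_le_one_of_mem hv (hadj v)

lemma SimpleGraph.IsClique.mem_or_mem_of_not_adj {K I : Set V} (hK : Γ.IsClique K)
    (hcover : K ∪ I = Set.univ) {u v : V} (hne : u ≠ v) (hnadj : ¬Γ.Adj u v) :
    u ∈ I ∨ v ∈ I := by
  have hu : u ∈ K ∪ I := hcover ▸ Set.mem_univ u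
  have hv : v ∈ K ∪ I := hcover ▸ Set.mem_univ v
  rcases hu with hu | hu
  · rcases hv with hv | hv
    · exact absurd (hK hu hv hne) hnadj
    · exact .inr hv
  · exact .inl hu

end Graph

namespace primeCoprimeGraph

variable {G : Type*} [Group G]

lemma adj_of_orderOf {g h : G} (hg : orderOf g = 1 ∨ (orderOf g).Prime) (hne : g ≠ h) :
    (primeCoprimeGraph G).Adj g h := by
  refine ⟨hne, ?_⟩
  rcases hg with hg | hg
  · simp [hg]
  · rcases hg.eq_one_or_self_of_dvd _ (Nat.gcd_dvd_left _ (orderOf h)) with hgcd | hgcd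
    exacts [.inl hgcd, .inr (by rwa [hgcd])]

lemma not_adj_of_orderOf_eq {g h : G} (hg : ¬(orderOf g = 1 ∨ (orderOf g).Prime))
    (hgh : orderOf g = orderOf h) : ¬(primeCoprimeGraph G).Adj g h := by
  rintro ⟨-, hgcd⟩
  rw [← hgh, Nat.gcd_self] at hgcd
  exact hg hgcd

lemma ne_inv_of_orderOf {g : G} (hg : ¬(orderOf g = 1 ∨ (orderOf g).Prime)) : g ≠ g⁻¹ := by
  intro hinv
  have hdvd : orderOf g ∣ 2 := orderOf_dvd_of_pow_eq_one (by rwa [sq, ← eq_inv_iff_mul_eq_one])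
  rcases (Nat.dvd_prime Nat.prime_two).1 hdvd with h1 | h2
  exacts [hg (.inl h1), hg (.inr (h2 ▸ Nat.prime_two))]

lemma exists_mem_orderOf_eq {K I : Set G} (hK : (primeCoprimeGraph G).IsClique K)
    (hcover : K ∪ I = Set.univ) {g : G} (hg : ¬(orderOf g = 1 ∨ (orderOf g).Prime)) :
    ∃ a ∈ I, orderOf a = orderOf g := by
  rcases hK.mem_or_mem_of_not_adj hcover (ne_inv_of_orderOf hg)
      (not_adj_of_orderOf_eq hg (orderOf_inv g).symm) with hgI | hgI
  exacts [⟨g, hgI, rfl⟩, ⟨g⁻¹, hgI, orderOf_inv g⟩]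

lemma not_adj_of_isSplit (hsplit : IsSplit (primeCoprimeGraph G)) {g h : G}
    (hg : ¬(orderOf g = 1 ∨ (orderOf g).Prime)) (hh : ¬(orderOf h = 1 ∨ (orderOf h).Prime)) :
    ¬(primeCoprimeGraph G).Adj g h := by
  rintro ⟨-, hgcd⟩
  obtain ⟨K, I, -, -, -, hcover, hK, hI⟩ := hsplit
  obtain ⟨a, haI, hag⟩ := exists_mem_orderOf_eq hK hcover hg
  obtain ⟨b, hbI, hbh⟩ := exists_mem_orderOf_eq hK hcover hh
  have hab : a ≠ b := by
    rintro rfl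
    rw [← hag, hbh, Nat.gcd_self] at hgcd
    exact hh hgcd
  exact hI haI hbI hab ⟨hab, by rwa [hag, hbh]⟩

lemma indepNum_of_isSplit_of_exists [Fintype G] (hsplit : IsSplit (primeCoprimeGraph G))
    (hex : ∃ g : G, ¬(orderOf g = 1 ∨ (orderOf g).Prime)) :
    indepNum (primeCoprimeGraph G) =
      Fintype.card {g : G // ¬(orderOf g = 1 ∨ (orderOf g).Prime)} := by
  classical
  obtain ⟨g₀, hg₀⟩ := hex
  rw [Fintype.card_subtype]
  refine indepNum_eq_card (fun a ha b hb _ =>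
    not_adj_of_isSplit hsplit (by simpa using ha) (by simpa using hb)) fun s hs => ?_
  by_cases hsub : s ⊆ ({g | ¬(orderOf g = 1 ∨ (orderOf g).Prime)} : Finset G)
  · exact Finset.card_le_card hsub
  · obtain ⟨x, hxs, hx⟩ := Finset.not_subset.1 hsub
    have hxP : orderOf x = 1 ∨ (orderOf x).Prime := by
      simpa only [Finset.mem_filter, Finset.mem_univ, true_and, not_not] using hx
    calc s.card ≤ 1 := hs.card_le_one_of_mem hxs fun _ => adj_of_orderOf hxP
      _ ≤ _ := Finset.card_pos.2 ⟨g₀, by simpa using hg₀⟩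

end primeCoprimeGraph

theorem indepNum_of_split (G : Type*) [Group G] [Fintype G]
    (h : IsSplit (primeCoprimeGraph G)) :
    ((∀ g : G, orderOf g = 1 ∨ (orderOf g).Prime) →
      indepNum (primeCoprimeGraph G) = 1) ∧
    (¬(∀ g : G, orderOf g = 1 ∨ (orderOf g).Prime) →
      indepNum (primeCoprimeGraph G) =
        Fintype.card G - Nat.card {g : G // orderOf g = 1 ∨ (orderOf g).Prime}) := by
  refine ⟨fun hall => indepNum_eq_one_of_forall_adj fun g _ =>
    primeCoprimeGraph.adj_of_orderOf (hall g), fun hnall => ?_⟩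
  rw [primeCoprimeGraph.indepNum_of_isSplit_of_exists h (not_forall.1 hnall),
    Fintype.card_subtype_compl, Nat.card_eq_fintype_card]
end

section
/- Let n = p^m, where p is a prime and m ≥ 2. Then the independence number of the prime-coprime graph of the cyclic group Z_n equals n − p. -/
/-!
In a finite `p`-group every order is a power of `p`. An element with `x ^ p = 1` has order `1`
or `p`, so it is adjacent to every other vertex, while two elements with `x ^ p ≠ 1` both have
order divisible by `p ^ 2`, hence a common divisor `p ^ 2` of their orders, and are not adjacent.
So the elements with `x ^ p ≠ 1` form a maximum independent set as soon as there is one.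
In the cyclic group of order `p ^ m` exactly `p` elements satisfy `x ^ p = 1`.
-/

open Finset

section Graph

variable {V : Type*} {Γ : SimpleGraph V}

theorem IsIndepSet.card_le_indepNum [Fintype V] {s : Finset V} (hs : IsIndepSet Γ s) :
    s.card ≤ indepNum Γ := by
  unfold indepNum
  refine le_trans ?_ (le_sup (mem_univ s))
  rw [if_pos hs]

theorem indepNum_le [Fintype V] {k : ℕ} (h : ∀ s : Finset V, IsIndepSet Γ s → s.card ≤ k) :
    indepNum Γ ≤ k :=
  Finset.sup_le fun s _ => by
    split_ifs with hs
    exacts [h s hs, Nat.zero_le k]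

theorem IsIndepSet.subset_singleton_of_forall_adj {s : Set V} (hs : IsIndepSet Γ s) {x : V}
    (hx : x ∈ s) (hadj : ∀ y, x ≠ y → Γ.Adj x y) : s ⊆ {x} := fun y hy =>
  Set.mem_singleton_iff.mpr <| by_contra fun hne => hs hx hy (Ne.symm hne) (hadj y (Ne.symm hne))

theorem indepNum_eq_card_of_forall_adj [Fintype V] (B : Finset V) (hB : IsIndepSet Γ B)
    (hne : B.Nonempty) (hadj : ∀ x ∉ B, ∀ y, x ≠ y → Γ.Adj x y) : indepNum Γ = B.card := by
  refine le_antisymm (indepNum_le fun s hs => ?_) hB.card_le_indepNum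
  by_cases hsB : s ⊆ B
  · exact card_le_card hsB
  obtain ⟨x, hxs, hxB⟩ := not_subset.mp hsB
  have hsx : s ⊆ {x} := by
    exact_mod_cast hs.subset_singleton_of_forall_adj hxs (hadj x hxB)
  exact (card_le_card hsx).trans (card_singleton x ▸ hne.card_pos)

end Graph

section PrimeCoprime

variable {G : Type*} {p : ℕ}

theorem primeCoprimeGraph_adj_of_pow_eq_one [Monoid G] (hp : p.Prime) {x y : G}
    (hx : x ^ p = 1) (hxy : x ≠ y) : (primeCoprimeGraph G).Adj x y := by
  refine ⟨hxy, ?_⟩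
  have hdvd : Nat.gcd (orderOf x) (orderOf y) ∣ p :=
    (Nat.gcd_dvd_left _ _).trans (orderOf_dvd_of_pow_eq_one hx)
  rcases (Nat.dvd_prime hp).mp hdvd with h | h
  exacts [.inl h, .inr (h ▸ hp)]

theorem not_primeCoprimeGraph_adj_of_sq_dvd [Monoid G] (hp : p.Prime) {x y : G}
    (hx : p ^ 2 ∣ orderOf x) (hy : p ^ 2 ∣ orderOf y) : ¬ (primeCoprimeGraph G).Adj x y := by
  rintro ⟨-, h⟩
  have hsq : Squarefree (Nat.gcd (orderOf x) (orderOf y)) := by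
    rcases h with h | h
    exacts [h ▸ squarefree_one, h.prime.squarefree]
  exact Nat.squarefree_iff_prime_squarefree.mp hsq p hp (sq p ▸ Nat.dvd_gcd hx hy)

theorem IsPGroup.sq_dvd_orderOf_of_pow_ne_one [Group G] (hp : p.Prime) (hG : IsPGroup p G)
    {x : G} (hx : x ^ p ≠ 1) : p ^ 2 ∣ orderOf x := by
  have := Fact.mk hp
  obtain ⟨k, hk⟩ := hG.exists_orderOf_eq_pow x
  rw [hk]
  refine pow_dvd_pow p (not_lt.mp fun hk2 => hx ?_)
  rw [← orderOf_dvd_iff_pow_eq_one, hk]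
  exact (pow_dvd_pow p (Nat.lt_succ_iff.mp hk2)).trans (pow_one p).dvd

theorem IsCyclic.card_pow_eq_one_of_dvd [Group G] [Fintype G] [DecidableEq G] [IsCyclic G]
    {d : ℕ} (hd : d ∣ Fintype.card G) : #{x : G | x ^ d = 1} = d := by
  have hd0 : d ≠ 0 := by
    rintro rfl
    exact Fintype.card_ne_zero (Nat.eq_zero_of_zero_dvd hd)
  rw [← sum_card_orderOf_eq_card_pow_eq_one hd0]
  refine (sum_congr rfl fun e he => IsCyclic.card_orderOf_eq_totient ?_).trans (Nat.sum_totient d)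
  exact (Nat.dvd_of_mem_divisors he).trans hd

theorem IsPGroup.indepNum_primeCoprimeGraph [Group G] [Fintype G] [DecidableEq G]
    (hp : p.Prime) (hG : IsPGroup p G) (hne : ∃ x : G, x ^ p ≠ 1) :
    indepNum (primeCoprimeGraph G) = #{x : G | x ^ p ≠ 1} := by
  refine indepNum_eq_card_of_forall_adj _ ?_ (by simpa [filter_nonempty_iff] using hne) ?_
  · intro x hx y hy _
    exact not_primeCoprimeGraph_adj_of_sq_dvd hp
      (hG.sq_dvd_orderOf_of_pow_ne_one hp (by simpa using hx))
      (hG.sq_dvd_orderOf_of_pow_ne_one hp (by simpa using hy))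
  · intro x hx y hxy
    exact primeCoprimeGraph_adj_of_pow_eq_one hp (by simpa using hx) hxy

theorem IsCyclic.indepNum_primeCoprimeGraph [Group G] [Fintype G] [IsCyclic G]
    (hp : p.Prime) (hG : IsPGroup p G) (hcard : p ^ 2 ∣ Fintype.card G) :
    indepNum (primeCoprimeGraph G) = Fintype.card G - p := by
  classical
  have hBcard : #{x : G | x ^ p ≠ 1} = Fintype.card G - p := by
    rw [filter_not, card_sdiff_of_subset (filter_subset _ _), card_univ,
      IsCyclic.card_pow_eq_one_of_dvd ((dvd_pow_self p two_ne_zero).trans hcard)]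
  have hp_lt : p < Fintype.card G :=
    (lt_self_pow₀ hp.one_lt one_lt_two).trans_le (Nat.le_of_dvd Fintype.card_pos hcard)
  obtain ⟨x, hx⟩ := card_pos.mp (hBcard ▸ Nat.sub_pos_of_lt hp_lt)
  rw [hG.indepNum_primeCoprimeGraph hp ⟨x, by simpa using hx⟩, hBcard]

end PrimeCoprime

theorem indepNum_cyclic_prime_power (n p m : ℕ) [NeZero n] (hp : p.Prime)
    (hm : 2 ≤ m) (hn : n = p ^ m) :
    indepNum (primeCoprimeGraph (Multiplicative (ZMod n))) = n - p := by
  have hcard : Fintype.card (Multiplicative (ZMod n)) = n := by simp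
  have hG : IsPGroup p (Multiplicative (ZMod n)) :=
    IsPGroup.of_card (n := m) (by rw [Nat.card_eq_fintype_card, hcard, hn])
  have hdvd : p ^ 2 ∣ Fintype.card (Multiplicative (ZMod n)) := by
    rw [hcard, hn]
    exact pow_dvd_pow p hm
  simpa only [hcard] using IsCyclic.indepNum_primeCoprimeGraph hp hG hdvd
end
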